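/- arXiv:gr-qc/9912090 — 4 statements merged into one kernel-verified Lean document; each statement's English description precedes it below -/
import Mathlib

section
/- Let X be a topological space and K a closed transitive relation on X, with K⁺(x) := {y : (x,y) ∈ K}. If the maps x ↦ interior(K⁺(x)) and x ↦ interior(K⁻(x)) are inner continuous, then for all x, y ∈ X: x ∈ interior(K⁻(y)) implies y ∈ interior(K⁺(x)), and conversely. -/
/-- Inner continuity of a set-valued map. -/
def InnerContinuous {X : Type*} [TopologicalSpace X] (F : X → Set X) : Prop :=
  ∀ x : X, ∀ C : Set X, IsCompact C → C ⊆ F x →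
    ∃ U ∈ nhds x, ∀ x' ∈ U, C ⊆ F x'

/-- if `x ↦ interior K⁺(x)` and `y ↦ interior K⁻(y)` are both
inner continuous, then `x ∈ interior K⁻(y) ↔ y ∈ interior K⁺(x)`. -/
theorem stmt7 {X : Type*} [TopologicalSpace X]
    (K : Set (X × X)) (hK : IsClosed K)
    (htrans : ∀ a b c : X, (a, b) ∈ K → (b, c) ∈ K → (a, c) ∈ K)
    (hfut : InnerContinuous (fun x => interior {y : X | (x, y) ∈ K}))
    (hpast : InnerContinuous (fun y => interior {x : X | (x, y) ∈ K})) :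
    ∀ x y : X, x ∈ interior {a : X | (a, y) ∈ K} ↔
      y ∈ interior {b : X | (x, b) ∈ K} := by
  intro x y
  constructor
  · intro hx
    obtain ⟨V, hV, hV'⟩ := hpast y {x} isCompact_singleton (by simpa using hx)
    refine mem_interior_iff_mem_nhds.2 (Filter.mem_of_superset hV ?_)
    intro y' hy'
    exact interior_subset (s := {a | (a, y') ∈ K}) (hV' y' hy' rfl)
  · intro hy
    obtain ⟨U, hU, hU'⟩ := hfut x {y} isCompact_singleton (by simpa using hy)
    refine mem_interior_iff_mem_nhds.2 (Filter.mem_of_superset hU ?_)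
    intro x' hx'
    exact interior_subset (s := {b | (x', b) ∈ K}) (hU' x' hx' rfl)
end

section
/- Let X be a topological space, let I be an open relation on X × X satisfying the path property that for every (a,b) ∈ I there is a continuous path γ : [0,1] → X with γ(0) = a, γ(1) = b and (a, γ(t)) ∈ I, (γ(t), b) ∈ I for all t ∈ (0,1), and let K be the smallest closed transitive relation containing I. Suppose B ⊆ X has compact boundary ∂B, x ∈ B, y ∉ closure(B), and (x,y) ∈ I. Then there exists z ∈ ∂B with (x,z) ∈ closure(I) and (z,y) ∈ closure(I), hence (x,z) ∈ K and (z,y) ∈ K. -/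
/-- A relation (as a set of pairs) is transitive. -/
def TransRel {X : Type*} (S : Set (X × X)) : Prop :=
  ∀ a b c : X, (a, b) ∈ S → (b, c) ∈ S → (a, c) ∈ S

/-- The smallest closed transitive relation containing `I`. -/
def kClosure {X : Type*} [TopologicalSpace X] (I : Set (X × X)) : Set (X × X) :=
  ⋂₀ {S : Set (X × X) | IsClosed S ∧ TransRel S ∧ I ⊆ S}

lemma closure_subset_kClosure {X : Type*} [TopologicalSpace X] (I : Set (X × X)) :
    closure I ⊆ kClosure I := by
  intro p hp
  intro S hS
  exact closure_minimal hS.2.2 hS.1 hp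

/-- base case of SW boundary lemma: if `(x,y) ∈ I` with
`x ∈ B`, `y ∉ closure B`, `∂B` compact, and `I` has the timelike-path
property, then some `z ∈ ∂B` satisfies `(x,z), (z,y) ∈ closure I ⊆ K`. -/
theorem stmt16 {X : Type*} [TopologicalSpace X]
    (I : Set (X × X)) (hIopen : IsOpen I)
    (K : Set (X × X)) (hK : K = kClosure I)
    (hpath : ∀ a b : X, (a, b) ∈ I → ∃ γ : ℝ → X, Continuous γ ∧
      γ 0 = a ∧ γ 1 = b ∧
      ∀ t : ℝ, 0 < t → t < 1 → (a, γ t) ∈ I ∧ (γ t, b) ∈ I)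
    (B : Set X) (hbd : IsCompact (frontier B))
    (x y : X) (hx : x ∈ B) (hy : y ∉ closure B) (hxy : (x, y) ∈ I) :
    ∃ z ∈ frontier B, (x, z) ∈ closure I ∧ (z, y) ∈ closure I ∧
      (x, z) ∈ K ∧ (z, y) ∈ K := by
  obtain ⟨γ, hγc, hγ0, hγ1, hγI⟩ := hpath x y hxy
  -- memberships in closure I along the whole path
  have hIcc : Set.Icc (0:ℝ) 1 = closure (Set.Ioo 0 1) := (closure_Ioo one_ne_zero.symm).symm
  have hleft : ∀ s ∈ Set.Icc (0:ℝ) 1, (x, γ s) ∈ closure I := by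
    intro s hs
    rw [hIcc] at hs
    exact map_mem_closure (f := fun t : ℝ => (x, γ t)) (by fun_prop) hs
      (fun t ht => (hγI t ht.1 ht.2).1)
  have hright : ∀ s ∈ Set.Icc (0:ℝ) 1, (γ s, y) ∈ closure I := by
    intro s hs
    rw [hIcc] at hs
    exact map_mem_closure (f := fun t : ℝ => (γ t, y)) (by fun_prop) hs
      (fun t ht => (hγI t ht.1 ht.2).2)
  -- find the crossing time
  set T : Set ℝ := Set.Icc (0:ℝ) 1 ∩ γ ⁻¹' closure B with hT
  have hTclosed : IsClosed T := isClosed_Icc.inter (isClosed_closure.preimage hγc)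
  have hTne : T.Nonempty := ⟨0, ⟨le_refl _, zero_le_one⟩, by
    simpa [hγ0] using subset_closure hx⟩
  have hTbdd : BddAbove T := BddAbove.mono Set.inter_subset_left (bddAbove_Icc)
  set s := sSup T with hs
  have hsT : s ∈ T := hTclosed.csSup_mem hTne hTbdd
  have hs01 : s ∈ Set.Icc (0:ℝ) 1 := hsT.1
  have hsB : γ s ∈ closure B := hsT.2
  have hs1 : s ≠ 1 := by
    intro h
    apply hy
    rw [← hγ1, ← h]; exact hsB
  have hslt1 : s < 1 := lt_of_le_of_ne hs01.2 hs1
  -- γ s ∉ interior B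
  have hnint : γ s ∉ interior B := by
    intro hint
    have : ∀ᶠ t in nhds s, γ t ∈ interior B :=
      hγc.continuousAt.eventually_mem (isOpen_interior.mem_nhds hint)
    obtain ⟨ε, hε, hball⟩ := Metric.eventually_nhds_iff.mp this
    set t := min (s + ε / 2) ((s + 1) / 2) with htdef
    have hst : s < t := lt_min (by linarith) (by linarith)
    have ht1 : t < 1 := lt_of_le_of_lt (min_le_right _ _) (by linarith)
    have hdist : dist t s < ε := by
      have h1 : t ≤ s + ε / 2 := min_le_left _ _
      rw [Real.dist_eq, abs_of_pos (by linarith)]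
      linarith
    have htT : t ∈ T := ⟨⟨le_of_lt (lt_of_le_of_lt hs01.1 hst), le_of_lt ht1⟩,
      subset_closure (interior_subset (hball hdist))⟩
    exact absurd (le_csSup hTbdd htT) (not_le.mpr hst)
  refine ⟨γ s, ⟨hsB, hnint⟩, hleft s hs01, hright s hs01, ?_, ?_⟩
  · rw [hK]; exact closure_subset_kClosure I (hleft s hs01)
  · rw [hK]; exact closure_subset_kClosure I (hright s hs01)
end

section
/- Let X be a set with an open (in some topology on X × X) relation I and let K be its transitive closure as a closed relation. Let N ⊆ X be open with X \ N finite. Assume Condition R: K ∩ N × N equals the smallest closed transitive relation K_N on N containing I ∩ N × N. If for every x ∈ N, K⁺_N(x) = cl_N(I⁺(x)) (causal continuity of the punctured space), then for every x ∈ N, K⁺(x) = cl_X(I⁺(x)), where closures are taken in N and X respectively; conversely if K⁺(x) = cl_X(I⁺(x)) for all x ∈ N then K⁺_N(x) = cl_N(I⁺(x)) for all x ∈ N, this direction requiring only that points of X \ N are limits of points of K⁺_N(x) whenever they lie in K⁺(x) (which follows from a boundary-crossing hypothesis). -/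
open Filter Topology

/-- Lemma kccandcc: under Condition `K ∩ N×N = K_N` and the
boundary-crossing hypothesis, k-causal continuity of the full space is
equivalent to causal continuity of the punctured space `N`. -/
theorem stmt17 {X : Type*} [TopologicalSpace X]
    (I : Set (X × X)) (hIopen : IsOpen I)
    (K : Set (X × X)) (hK : K = kClosure I)
    (N : Set X) (hNopen : IsOpen N) (hfin : (Nᶜ).Finite)
    (KN : Set (X × X)) (hcond : K ∩ (N ×ˢ N) = KN)
    (hbdry : ∀ x ∈ N, ∀ y ∈ Nᶜ, (x, y) ∈ K →
      ∃ u : ℕ → X, (∀ k, u k ∈ N ∧ (x, u k) ∈ K) ∧ Tendsto u atTop (𝓝 y)) :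
    (∀ x ∈ N, {y : X | (x, y) ∈ KN} =
        N ∩ closure {y ∈ N | (x, y) ∈ I}) ↔
    (∀ x ∈ N, {y : X | (x, y) ∈ K} = closure {y : X | (x, y) ∈ I}) := by
  have hKclosed : IsClosed K := by
    rw [hK]
    exact isClosed_sInter fun S hS => hS.1
  have hIK : I ⊆ K := by
    rw [hK]
    exact fun p hp S hS => hS.2.2 hp
  subst hcond
  have hclA : ∀ x, closure {y : X | (x, y) ∈ I} ⊆ {y : X | (x, y) ∈ K} :=
    fun x => closure_minimal (fun y hy => hIK hy)
      (hKclosed.preimage (Continuous.prodMk_right x))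
  have hmono : ∀ x : X, {y ∈ N | (x, y) ∈ I} ⊆ {y : X | (x, y) ∈ I} :=
    fun x y hy => hy.2
  constructor
  · intro h x hx
    apply Set.Subset.antisymm _ (hclA x)
    have key : ∀ y ∈ N, (x, y) ∈ K → y ∈ closure {y : X | (x, y) ∈ I} := by
      intro y hyN hyK
      have : y ∈ N ∩ closure {y ∈ N | (x, y) ∈ I} := by
        rw [← h x hx]
        exact ⟨hyK, hx, hyN⟩
      exact closure_mono (hmono x) this.2
    intro y hy
    by_cases hyN : y ∈ N
    · exact key y hyN hy
    · obtain ⟨u, hu, hlim⟩ := hbdry x hx y hyN hy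
      exact isClosed_closure.mem_of_tendsto hlim
        (Eventually.of_forall fun k => key (u k) (hu k).1 (hu k).2)
  · intro h x hx
    ext y
    constructor
    · rintro ⟨hyK, -, hyN⟩
      have hycl : y ∈ closure {y : X | (x, y) ∈ I} := by
        rw [← h x hx]; exact hyK
      refine ⟨hyN, ?_⟩
      rw [mem_closure_iff] at hycl ⊢
      intro o ho hyo
      obtain ⟨z, ⟨hzo, hzN⟩, hzI⟩ := hycl (o ∩ N) (ho.inter hNopen) ⟨hyo, hyN⟩
      exact ⟨z, hzo, hzN, hzI⟩
    · rintro ⟨hyN, hycl⟩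
      have : y ∈ {y : X | (x, y) ∈ K} := by
        rw [h x hx]
        exact closure_mono (hmono x) hycl
      exact ⟨this, hx, hyN⟩
end

section
/- Let X be a first-countable topological space, I an open relation on X, K the smallest closed transitive relation containing I. Let γ : [0,1] → X be continuous with points 0 = t₀ < t₁ < ... < t_{r+1} = 1 such that for each j, and for all s, t with t_j < s < t < t_{j+1}, (γ(s), γ(t)) ∈ some relation J ⊆ K. Then (γ(0), γ(1)) ∈ K. -/
open Filter Topology

theorem isClosed_kClosure {X : Type*} [TopologicalSpace X] (I : Set (X × X)) :
    IsClosed (kClosure I) :=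
  isClosed_sInter fun _ hS => hS.1

theorem transRel_kClosure {X : Type*} [TopologicalSpace X] (I : Set (X × X)) :
    TransRel (kClosure I) :=
  fun a b c hab hbc S hS => hS.2.1 a b c (hab S hS) (hbc S hS)

theorem IsClosed.mem_of_forall_mem_Ioo {X : Type*} [TopologicalSpace X] {K : Set (X × X)}
    (hK : IsClosed K) {γ : ℝ → X} {a b : ℝ} (ha : ContinuousAt γ a) (hb : ContinuousAt γ b)
    (hab : a < b) (hseg : ∀ s u, a < s → s < u → u < b → (γ s, γ u) ∈ K) :
    (γ a, γ b) ∈ K := by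
  have hlim : Tendsto (fun ε : ℝ => (γ (a + ε), γ (b - ε))) (𝓝[>] 0) (𝓝 (γ a, γ b)) := by
    have hleft : Tendsto (fun ε : ℝ => a + ε) (𝓝[>] 0) (𝓝 a) :=
      ((continuous_const_add a).tendsto' 0 a (add_zero a)).mono_left nhdsWithin_le_nhds
    have hright : Tendsto (fun ε : ℝ => b - ε) (𝓝[>] 0) (𝓝 b) :=
      ((continuous_sub_left b).tendsto' 0 b (sub_zero b)).mono_left nhdsWithin_le_nhds
    exact (ha.tendsto.comp hleft).prodMk_nhds (hb.tendsto.comp hright)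
  have hsmall : ∀ᶠ ε in 𝓝[>] (0 : ℝ), ε ∈ Set.Ioo 0 ((b - a) / 2) :=
    Ioo_mem_nhdsGT (by linarith)
  refine hK.mem_of_tendsto hlim (hsmall.mono fun ε ⟨hε, hε'⟩ => hseg _ _ ?_ ?_ ?_) <;> linarith

theorem TransRel.mem_of_forall_succ {X : Type*} {R : Set (X × X)} (hR : TransRel R) {n : ℕ}
    {f : Fin (n + 2) → X} (hf : ∀ j : Fin (n + 1), (f j.castSucc, f j.succ) ∈ R) :
    (f 0, f (Fin.last (n + 1))) ∈ R := by
  suffices h : ∀ j : Fin (n + 1), (f 0, f j.succ) ∈ R from h (Fin.last n)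
  intro j
  induction j using Fin.induction with
  | zero => simpa using hf 0
  | succ j ih => exact hR _ _ _ ih (Fin.succ_castSucc j ▸ hf j.succ)

theorem stmt19_general {X : Type*} [TopologicalSpace X]
    (I : Set (X × X))
    (K : Set (X × X)) (hK : K = kClosure I)
    (J : Set (X × X)) (hJK : J ⊆ K)
    (γ : ℝ → X) (hγ : Continuous γ)
    (r : ℕ) (t : Fin (r + 2) → ℝ) (hmono : StrictMono t)
    (h0 : t 0 = 0) (h1 : t (Fin.last (r + 1)) = 1)
    (hseg : ∀ j : Fin (r + 1), ∀ s u : ℝ,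
      t j.castSucc < s → s < u → u < t j.succ → (γ s, γ u) ∈ J) :
    (γ 0, γ 1) ∈ K := by
  subst hK
  have hstep : ∀ j : Fin (r + 1), (γ (t j.castSucc), γ (t j.succ)) ∈ kClosure I := fun j =>
    (isClosed_kClosure I).mem_of_forall_mem_Ioo hγ.continuousAt hγ.continuousAt
      (hmono Fin.castSucc_lt_succ) fun s u hs hsu hu => hJK (hseg j s u hs hsu hu)
  simpa only [Function.comp_def, h0, h1] using
    (transRel_kClosure I).mem_of_forall_succ (f := γ ∘ t) hstep

/-- a continuous curve whose open segments between the
subdivision points `0 = t₀ < … < t_{r+1} = 1` are pairwise `J`-related, with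
`J ⊆ K`, has its endpoints `K`-related. -/
theorem stmt19 {X : Type*} [TopologicalSpace X] [FirstCountableTopology X]
    (I : Set (X × X)) (hIopen : IsOpen I)
    (K : Set (X × X)) (hK : K = kClosure I)
    (J : Set (X × X)) (hJK : J ⊆ K)
    (γ : ℝ → X) (hγ : Continuous γ)
    (r : ℕ) (t : Fin (r + 2) → ℝ) (hmono : StrictMono t)
    (h0 : t 0 = 0) (h1 : t (Fin.last (r + 1)) = 1)
    (hseg : ∀ j : Fin (r + 1), ∀ s u : ℝ,
      t j.castSucc < s → s < u → u < t j.succ → (γ s, γ u) ∈ J) :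
    (γ 0, γ 1) ∈ K :=
  stmt19_general I K hK J hJK γ hγ r t hmono h0 h1 hseg
end
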